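/- For every real a > 1, every integer m ≥ 1 and every x ≥ 0, the second central moment satisfies Λ²_m(x) = (1 − 3mx + 3m²x²)/(3m²) − 2·(mx − 1)·x·(log a)/((a^{1/m} − 1)·m²) + x²·(log a)²/((a^{1/m} − 1)²·m²). -/

import Mathlib

open Real MeasureTheory Filter

lemma S0 (y : ℝ) : ∑' k : ℕ, y ^ k / (Nat.factorial k : ℝ) = Real.exp y := by
  rw [Real.exp_eq_exp_ℝ, NormedSpace.exp_eq_tsum_div]

lemma sum0 (y : ℝ) : Summable (fun k : ℕ => y ^ k / (Nat.factorial k : ℝ)) :=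
  Real.summable_pow_div_factorial y

lemma shift1 (y : ℝ) : (fun k : ℕ => ((k+1 : ℕ) : ℝ) * y ^ (k+1) / (Nat.factorial (k+1) : ℝ))
    = fun k : ℕ => y * (y ^ k / (Nat.factorial k : ℝ)) := by
  funext k
  rw [Nat.factorial_succ]
  push_cast
  have h : (Nat.factorial k : ℝ) ≠ 0 := Nat.cast_ne_zero.2 (Nat.factorial_ne_zero k)
  field_simp
  ring

lemma sum1 (y : ℝ) : Summable (fun k : ℕ => (k : ℝ) * y ^ k / (Nat.factorial k : ℝ)) := by
  rw [← summable_nat_add_iff 1]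
  have : (fun k : ℕ => ((k : ℕ) + 1 : ℝ) * y ^ (k+1) / (Nat.factorial (k+1) : ℝ))
      = fun k : ℕ => y * (y ^ k / (Nat.factorial k : ℝ)) := by
    have := shift1 y; push_cast at this ⊢; exact this
  simp only [Nat.cast_add, Nat.cast_one] at this ⊢
  rw [this]
  exact (sum0 y).mul_left y

lemma S1 (y : ℝ) : ∑' k : ℕ, (k : ℝ) * y ^ k / (Nat.factorial k : ℝ) = y * Real.exp y := by
  rw [Summable.tsum_eq_zero_add (sum1 y)]
  have : (fun k : ℕ => ((k : ℕ) + 1 : ℝ) * y ^ (k+1) / (Nat.factorial (k+1) : ℝ))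
      = fun k : ℕ => y * (y ^ k / (Nat.factorial k : ℝ)) := by
    have := shift1 y; push_cast at this ⊢; exact this
  push_cast
  simp only [this]
  rw [tsum_mul_left, S0]
  simp

lemma shift2 (y : ℝ) : (fun k : ℕ => ((k : ℕ) + 1 : ℝ)^2 * y ^ (k+1) / (Nat.factorial (k+1) : ℝ))
    = fun k : ℕ => y * ((k : ℝ) * y ^ k / (Nat.factorial k : ℝ) + y ^ k / (Nat.factorial k : ℝ)) := by
  funext k
  rw [Nat.factorial_succ]
  have h : (Nat.factorial k : ℝ) ≠ 0 := Nat.cast_ne_zero.2 (Nat.factorial_ne_zero k)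
  have h2 : ((k : ℝ) + 1) ≠ 0 := by positivity
  field_simp
  push_cast
  ring

lemma sum2 (y : ℝ) : Summable (fun k : ℕ => (k : ℝ)^2 * y ^ k / (Nat.factorial k : ℝ)) := by
  rw [← summable_nat_add_iff 1]
  push_cast
  simp only [shift2 y]
  exact ((sum1 y).add (sum0 y)).mul_left y

lemma S2 (y : ℝ) : ∑' k : ℕ, (k : ℝ)^2 * y ^ k / (Nat.factorial k : ℝ)
    = (y^2 + y) * Real.exp y := by
  rw [Summable.tsum_eq_zero_add (sum2 y)]
  push_cast
  simp only [shift2 y]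
  rw [tsum_mul_left, Summable.tsum_add (sum1 y) (sum0 y), S1, S0]
  ring

lemma intpow (c d x : ℝ) : ∫ t in c..d, (t - x)^2 = ((d-x)^3 - (c-x)^3)/3 := by
  have h := intervalIntegral.integral_comp_sub_right (fun u : ℝ => u^2) x (a := c) (b := d)
  rw [h, integral_pow]
  norm_num

/-- The modified Szász–Mirakjan–Kantorovich operator of Mishra and Yadav. -/
noncomputable def szaszKant (a : ℝ) (m : ℕ) (f : ℝ → ℝ) (x : ℝ) : ℝ :=
  (m : ℝ) * ∑' k : ℕ,
    Real.exp (-(x * Real.log a / (a ^ ((1 : ℝ) / (m : ℝ)) - 1))) *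
      (x * Real.log a / (a ^ ((1 : ℝ) / (m : ℝ)) - 1)) ^ k / (Nat.factorial k : ℝ) *
      ∫ t in ((k : ℝ) / (m : ℝ))..(((k : ℝ) + 1) / (m : ℝ)), f t

/-- The `n`-th central moment of the operator. -/
noncomputable def szaszKantCM (a : ℝ) (m : ℕ) (n : ℕ) (x : ℝ) : ℝ :=
  szaszKant a m (fun t => (t - x) ^ n) x

theorem szaszKantCM_two (a : ℝ) (ha : 1 < a) (m : ℕ) (hm : 1 ≤ m)
    (x : ℝ) (hx : 0 ≤ x) :
    szaszKantCM a m 2 x =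
      (1 - 3 * (m : ℝ) * x + 3 * (m : ℝ) ^ 2 * x ^ 2) / (3 * (m : ℝ) ^ 2) -
        2 * ((m : ℝ) * x - 1) * x * Real.log a / ((a ^ ((1 : ℝ) / (m : ℝ)) - 1) * (m : ℝ) ^ 2) +
        x ^ 2 * Real.log a ^ 2 / ((a ^ ((1 : ℝ) / (m : ℝ)) - 1) ^ 2 * (m : ℝ) ^ 2) := by
  have hm0 : (0:ℝ) < (m:ℝ) := by exact_mod_cast hm
  have hmne : (m:ℝ) ≠ 0 := ne_of_gt hm0
  have hb : 1 < a ^ ((1:ℝ)/(m:ℝ)) :=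
    (Real.one_lt_rpow_iff_of_pos (by linarith)).2 (Or.inl ⟨ha, by positivity⟩)
  have hd : a ^ ((1:ℝ)/(m:ℝ)) - 1 ≠ 0 := by linarith
  set y : ℝ := x * Real.log a / (a ^ ((1:ℝ)/(m:ℝ)) - 1) with hy
  unfold szaszKantCM szaszKant
  have hterm : ∀ k : ℕ,
      Real.exp (-y) * y ^ k / (Nat.factorial k : ℝ) *
        ∫ t in ((k : ℝ) / (m : ℝ))..(((k : ℝ) + 1) / (m : ℝ)), (t - x) ^ 2
      = Real.exp (-y) *
          ((1/(m:ℝ)^3) * ((k:ℝ)^2 * y^k / (Nat.factorial k : ℝ)) +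
           (1/(m:ℝ)^3 - 2*x/(m:ℝ)^2) * ((k:ℝ) * y^k / (Nat.factorial k : ℝ)) +
           (x^2/(m:ℝ) - x/(m:ℝ)^2 + 1/(3*(m:ℝ)^3)) * (y^k / (Nat.factorial k : ℝ))) := by
    intro k
    rw [intpow]
    have hk : (Nat.factorial k : ℝ) ≠ 0 := Nat.cast_ne_zero.2 (Nat.factorial_ne_zero k)
    field_simp
    ring
  rw [tsum_congr hterm, tsum_mul_left,
    Summable.tsum_add (((sum2 y).mul_left _).add ((sum1 y).mul_left _)) ((sum0 y).mul_left _),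
    Summable.tsum_add ((sum2 y).mul_left _) ((sum1 y).mul_left _),
    tsum_mul_left, tsum_mul_left, tsum_mul_left, S0, S1, S2, Real.exp_neg, hy]
  have hE : Real.exp (x * Real.log a / (a ^ ((1:ℝ)/(m:ℝ)) - 1)) ≠ 0 := Real.exp_ne_zero _
  field_simp
  ring
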